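/- Fix h ≥ 0 and let Ψ_h(p) = exp(h·cv₁(p)) for p ∈ (0,1), where cv₁(p) = Φ⁻¹(1−p). Then Ψ_h is completely monotone on (0, 1/2]: for every integer k ≥ 0 and every p ∈ (0, 1/2], 0 ≤ (−1)^k Ψ_h^{(k)}(p). -/

import Mathlib

/-!
Since `cv' = -1 / φ(cv)`, the chain rule gives `(F ∘ cv)' = -(F' / φ) ∘ cv`. The operator
`F ↦ F' / φ` sends `x ^ a * exp (h x + m x² / 2)` to
`√(2π) (a x ^ (a - 1) + h x ^ a + m x ^ (a + 1)) exp (h x + (m + 1) x² / 2)`, so for `h ≥ 0`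
it preserves the cone of nonnegative combinations of such functions. By induction
`(-1) ^ k Ψ_h^{(k)} = G ∘ cv` with `G` in the cone, and `G ∘ cv ≥ 0` because `cv ≥ 0` on
`(0, 1/2]`.
-/

/-- The standard normal density φ(x) = (2π)^{-1/2} exp(-x²/2). -/
noncomputable def stdNormalPdf (x : ℝ) : ℝ :=
  (Real.sqrt (2 * Real.pi))⁻¹ * Real.exp (-x ^ 2 / 2)

/-- The standard normal CDF Φ(x) = ∫_{-∞}^x φ(t) dt. -/
noncomputable def stdNormalCdf (x : ℝ) : ℝ :=
  ∫ t in Set.Iic x, stdNormalPdf t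

open MeasureTheory ProbabilityTheory Real Filter Set Topology

lemma stdNormalPdf_eq_gaussianPDFReal : stdNormalPdf = gaussianPDFReal 0 1 := by
  ext x
  simp [gaussianPDFReal, stdNormalPdf]

lemma stdNormalPdf_pos (x : ℝ) : 0 < stdNormalPdf x := by
  unfold stdNormalPdf
  positivity

lemma continuous_stdNormalPdf : Continuous stdNormalPdf := by
  unfold stdNormalPdf
  fun_prop

lemma integrable_stdNormalPdf : Integrable stdNormalPdf :=
  stdNormalPdf_eq_gaussianPDFReal ▸ integrable_gaussianPDFReal 0 1

lemma integral_stdNormalPdf : ∫ x, stdNormalPdf x = 1 :=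
  stdNormalPdf_eq_gaussianPDFReal ▸ integral_gaussianPDFReal_eq_one 0 one_ne_zero

lemma stdNormalPdf_neg (x : ℝ) : stdNormalPdf (-x) = stdNormalPdf x := by
  simp [stdNormalPdf]

lemma stdNormalCdf_sub_stdNormalCdf (a b : ℝ) :
    stdNormalCdf b - stdNormalCdf a = ∫ t in a..b, stdNormalPdf t :=
  intervalIntegral.integral_Iic_sub_Iic integrable_stdNormalPdf.integrableOn
    integrable_stdNormalPdf.integrableOn

lemma hasDerivAt_stdNormalCdf (x : ℝ) : HasDerivAt stdNormalCdf (stdNormalPdf x) x := by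
  have hcdf :
      (fun y => stdNormalCdf 0 + ∫ t in (0 : ℝ)..y, stdNormalPdf t) = stdNormalCdf := by
    ext y
    rw [← stdNormalCdf_sub_stdNormalCdf]
    ring
  rw [← hcdf]
  exact (intervalIntegral.integral_hasDerivAt_right integrable_stdNormalPdf.intervalIntegrable
    (continuous_stdNormalPdf.stronglyMeasurableAtFilter _ _)
    continuous_stdNormalPdf.continuousAt).const_add _

lemma strictMono_stdNormalCdf : StrictMono stdNormalCdf := fun a b hab => by
  have := intervalIntegral.intervalIntegral_pos_of_pos_on
    integrable_stdNormalPdf.intervalIntegrable (fun x _ => stdNormalPdf_pos x) hab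
  linarith [stdNormalCdf_sub_stdNormalCdf a b]

lemma stdNormalCdf_zero : stdNormalCdf 0 = 1 / 2 := by
  have hsymm : ∫ t in Ioi 0, stdNormalPdf t = stdNormalCdf 0 := by
    simpa [stdNormalPdf_neg, stdNormalCdf] using (integral_comp_neg_Iic 0 stdNormalPdf).symm
  have htotal : stdNormalCdf 0 + ∫ t in Ioi 0, stdNormalPdf t = 1 :=
    integral_stdNormalPdf ▸ intervalIntegral.integral_Iic_add_Ioi
      integrable_stdNormalPdf.integrableOn integrable_stdNormalPdf.integrableOn
  linarith

section UpperQuantile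

variable {Φ g : ℝ → ℝ} {s : Set ℝ} {p : ℝ}

lemma continuousAt_of_strictMono_comp_eq (hΦ : StrictMono Φ) {u : ℝ → ℝ}
    (hu : ContinuousAt u p) (hs : s ∈ 𝓝 p) (hg : ∀ q ∈ s, Φ (g q) = u q) :
    ContinuousAt g p := by
  rw [ContinuousAt, tendsto_order]
  constructor
  · intro b hb
    have hlt : Φ b < u p := hg p (mem_of_mem_nhds hs) ▸ hΦ hb
    filter_upwards [hs, hu.eventually (lt_mem_nhds hlt)] with q hq hbq
    exact hΦ.lt_iff_lt.mp (hg q hq ▸ hbq)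
  · intro b hb
    have hlt : u p < Φ b := hg p (mem_of_mem_nhds hs) ▸ hΦ hb
    filter_upwards [hs, hu.eventually (gt_mem_nhds hlt)] with q hq hbq
    exact hΦ.lt_iff_lt.mp (hg q hq ▸ hbq)

lemma hasDerivAt_of_strictMono_comp_eq_one_sub (hΦ : StrictMono Φ) {φ : ℝ}
    (hΦφ : HasDerivAt Φ φ (g p)) (hφ : φ ≠ 0) (hs : s ∈ 𝓝 p)
    (hg : ∀ q ∈ s, Φ (g q) = 1 - q) :
    HasDerivAt g (-φ⁻¹) p := by
  have hcont := continuousAt_of_strictMono_comp_eq hΦ (by fun_prop) hs hg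
  have hinv : ∀ᶠ q in 𝓝 p, 1 - Φ (g q) = q := by
    filter_upwards [hs] with q hq
    rw [hg q hq, sub_sub_cancel]
  simpa using
    HasDerivAt.of_local_left_inverse hcont (hΦφ.const_sub 1) (neg_ne_zero.mpr hφ) hinv

end UpperQuantile

section Quantile

variable {cv : ℝ → ℝ} (hcv : ∀ p ∈ Ioo (0 : ℝ) 1, stdNormalCdf (cv p) = 1 - p)
include hcv

lemma hasDerivAt_cv {p : ℝ} (hp : p ∈ Ioo (0 : ℝ) 1) :
    HasDerivAt cv (-(stdNormalPdf (cv p))⁻¹) p :=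
  hasDerivAt_of_strictMono_comp_eq_one_sub strictMono_stdNormalCdf (hasDerivAt_stdNormalCdf _)
    (stdNormalPdf_pos _).ne' (isOpen_Ioo.mem_nhds hp) hcv

lemma cv_nonneg {p : ℝ} (hp : p ∈ Ioc (0 : ℝ) (1 / 2)) : 0 ≤ cv p := by
  have hlt : stdNormalCdf 0 ≤ stdNormalCdf (cv p) := by
    rw [hcv p ⟨hp.1, by linarith [hp.2]⟩, stdNormalCdf_zero]
    linarith [hp.2]
  exact strictMono_stdNormalCdf.le_iff_le.mp hlt

lemma hasDerivAt_comp_cv {F H : ℝ → ℝ} (hF : ∀ x, HasDerivAt F (stdNormalPdf x * H x) x)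
    {p : ℝ} (hp : p ∈ Ioo (0 : ℝ) 1) : HasDerivAt (fun q => F (cv q)) (-H (cv p)) p := by
  refine ((hF (cv p)).comp p (hasDerivAt_cv hcv hp)).congr_deriv ?_
  field_simp [(stdNormalPdf_pos (cv p)).ne']

end Quantile

lemma hasDerivAt_pow_mul_exp (h : ℝ) (a m : ℕ) (x : ℝ) :
    HasDerivAt (fun x => x ^ a * exp (h * x + m * x ^ 2 / 2))
      (stdNormalPdf x * (√(2 * π) * (a * x ^ (a - 1) + h * x ^ a + m * x ^ (a + 1)) *
        exp (h * x + (m + 1 : ℕ) * x ^ 2 / 2))) x := by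
  have hexponent : HasDerivAt (fun x => h * x + m * x ^ 2 / 2) (h + m * x) x := by
    refine (((hasDerivAt_id x).const_mul h).add
      (((hasDerivAt_pow 2 x).const_mul (m : ℝ)).div_const 2)).congr_deriv ?_
    simp only [mul_one, Nat.cast_ofNat, Nat.add_one_sub_one, pow_one]
    ring
  refine ((hasDerivAt_pow a x).mul hexponent.exp).congr_deriv ?_
  have hsplit : exp (h * x + m * x ^ 2 / 2) =
      exp (-x ^ 2 / 2) * exp (h * x + (m + 1 : ℕ) * x ^ 2 / 2) := by
    rw [← exp_add]; push_cast; ring_nf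
  rw [hsplit, stdNormalPdf]
  have hsqrt : √(2 * π) ≠ 0 := by positivity
  field_simp
  rcases a with _ | a
  · simp [mul_comm]
  · simp only [Nat.cast_add, Nat.cast_one, add_tsub_cancel_right, pow_succ]
    ring

inductive GaussExpCone (h : ℝ) : (ℝ → ℝ) → Prop
  | monomial (a m : ℕ) : GaussExpCone h fun x => x ^ a * exp (h * x + m * x ^ 2 / 2)
  | add {F G : ℝ → ℝ} :
      GaussExpCone h F → GaussExpCone h G → GaussExpCone h fun x => F x + G x
  | smul {F : ℝ → ℝ} {c : ℝ} :
      0 ≤ c → GaussExpCone h F → GaussExpCone h fun x => c * F x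

namespace GaussExpCone

variable {h : ℝ} {F : ℝ → ℝ}

lemma nonneg (hF : GaussExpCone h F) {x : ℝ} (hx : 0 ≤ x) : 0 ≤ F x := by
  induction hF with
  | monomial a m => positivity
  | add _ _ ihF ihG => exact add_nonneg ihF ihG
  | smul hc _ ih => exact mul_nonneg hc ih

lemma exists_hasDerivAt_eq_stdNormalPdf_mul (hh : 0 ≤ h) (hF : GaussExpCone h F) :
    ∃ H, GaussExpCone h H ∧ ∀ x, HasDerivAt F (stdNormalPdf x * H x) x := by
  induction hF with
  | monomial a m =>
    let E : ℕ → ℝ → ℝ := fun b x => x ^ b * exp (h * x + (m + 1 : ℕ) * x ^ 2 / 2)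
    refine ⟨fun x => √(2 * π) * a * E (a - 1) x +
        (√(2 * π) * h * E a x + √(2 * π) * m * E (a + 1) x),
      .add (.smul (by positivity) (.monomial _ _))
        (.add (.smul (by positivity) (.monomial _ _)) (.smul (by positivity) (.monomial _ _))),
      fun x => (hasDerivAt_pow_mul_exp h a m x).congr_deriv (by ring)⟩
  | add _ _ ihF ihG =>
    obtain ⟨H₁, hH₁, hd₁⟩ := ihF
    obtain ⟨H₂, hH₂, hd₂⟩ := ihG
    exact ⟨_, hH₁.add hH₂, fun x => ((hd₁ x).add (hd₂ x)).congr_deriv (by ring)⟩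
  | smul hc _ ih =>
    obtain ⟨H, hH, hd⟩ := ih
    exact ⟨_, hH.smul hc, fun x => ((hd x).const_mul _).congr_deriv (by ring)⟩

lemma exists_iteratedDeriv_comp_eq (hh : 0 ≤ h) {cv : ℝ → ℝ}
    (hcv : ∀ p ∈ Ioo (0 : ℝ) 1, stdNormalCdf (cv p) = 1 - p) (k : ℕ)
    (hF : GaussExpCone h F) :
    ∃ G, GaussExpCone h G ∧ ∀ p ∈ Ioo (0 : ℝ) 1,
      (-1) ^ k * iteratedDeriv k (fun q => F (cv q)) p = G (cv p) := by
  induction k generalizing F with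
  | zero => exact ⟨F, hF, fun p _ => by simp⟩
  | succ k ih =>
    obtain ⟨H, hH, hdH⟩ := hF.exists_hasDerivAt_eq_stdNormalPdf_mul hh
    obtain ⟨G, hG, hGeq⟩ := ih hH
    refine ⟨G, hG, fun p hp => ?_⟩
    have hderiv : deriv (fun q => F (cv q)) =ᶠ[𝓝 p] -fun q => H (cv q) := by
      filter_upwards [isOpen_Ioo.mem_nhds hp] with q hq
      exact (hasDerivAt_comp_cv hcv hdH hq).deriv
    rw [iteratedDeriv_succ', hderiv.iteratedDeriv_eq, iteratedDeriv_neg, ← hGeq p hp, pow_succ]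
    ring

end GaussExpCone

/-- fix h ≥ 0 and let Ψ_h(p) = exp(h·cv₁(p)) with cv₁(p) = Φ⁻¹(1−p) on
(0,1). Then Ψ_h is completely monotone on (0, 1/2]: for every integer k ≥ 0 and every
p ∈ (0, 1/2], 0 ≤ (−1)^k Ψ_h^{(k)}(p). -/
theorem stmt_11 (h : ℝ) (hh : 0 ≤ h)
    (cv : ℝ → ℝ) (hcv : ∀ p ∈ Set.Ioo (0 : ℝ) 1, stdNormalCdf (cv p) = 1 - p) :
    ∀ k : ℕ, ∀ p ∈ Set.Ioc (0 : ℝ) (1 / 2),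
      0 ≤ (-1 : ℝ) ^ k * iteratedDeriv k (fun q => Real.exp (h * cv q)) p := by
  intro k p hp
  have hexp : GaussExpCone h fun x => exp (h * x) := by
    simpa using GaussExpCone.monomial (h := h) 0 0
  obtain ⟨G, hG, hGeq⟩ := hexp.exists_iteratedDeriv_comp_eq hh hcv k
  rw [hGeq p ⟨hp.1, hp.2.trans_lt one_half_lt_one⟩]
  exact hG.nonneg (cv_nonneg hcv hp)
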